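/- arXiv:2008.03768 — 3 statements merged into one kernel-verified Lean document; each statement's English description precedes it below -/
import Mathlib

section
/- Let H be a C¹ gauge function (away from 0) with polar H°. Then for every x ∈ ℝⁿ \ {0}: H°(x) ∇H(∇H°(x)) = x and H(x) ∇H°(∇H(x)) = x. -/
open MeasureTheory Set

noncomputable def polarGauge (n : ℕ) (H : EuclideanSpace ℝ (Fin n) → ℝ)
    (x : EuclideanSpace ℝ (Fin n)) : ℝ :=
  sSup {r : ℝ | ∃ ξ : EuclideanSpace ℝ (Fin n), ξ ≠ 0 ∧ r = inner ℝ x ξ / H ξ}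

/-!
Convexity along the segment from `x` to `y` gives `⟪∇f x, y - x⟫ ≤ f y - f x` for a convex `f`
differentiable at `x`; if `f` is moreover positively one-homogeneous, testing `y = 2x` and
`y = x/2` yields Euler's identity `⟪∇f x, x⟫ = f x`, hence `⟪∇f x, y⟫ ≤ f y`. Both `H` and its
polar `H°` are such functions. For `H` this gives `H°(∇H x) = 1`; for `H°` it gives
`H(∇H° x) = ⟪∇H° x, ∇H(∇H° x)⟫ ≤ H°(∇H(∇H° x)) = 1`, and `⟪x, ∇H° x⟫ = H° x` gives the reverse
inequality. So `η ↦ H°(x) H(η) - ⟪x, η⟫`, nonnegative by definition of `H°`, attains its minimum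
`0` at `η = ∇H° x`, where its gradient `H°(x) ∇H(η) - x` must vanish. The second identity is
the same argument with the roles of `H` and `H°` exchanged.
-/

open scoped Gradient RealInnerProductSpace

section Gradient

variable {E : Type*} [NormedAddCommGroup E] [InnerProductSpace ℝ E] [CompleteSpace E]
  {f : E → ℝ} {x : E}

theorem ConvexOn.inner_gradient_sub_le (hf : ConvexOn ℝ univ f) (hd : DifferentiableAt ℝ f x)
    (y : E) : ⟪∇ f x, y - x⟫ ≤ f y - f x := by
  have hline : ConvexOn ℝ univ (f ∘ AffineMap.lineMap (k := ℝ) x y) := hf.comp_affineMap _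
  have hderiv : HasDerivAt (f ∘ AffineMap.lineMap (k := ℝ) x y) ⟪∇ f x, y - x⟫ 0 := by
    rw [inner_gradient_left]
    refine HasFDerivAt.comp_hasDerivAt _ ?_ AffineMap.hasDerivAt_lineMap
    simpa using hd.hasFDerivAt
  simpa [slope_def_field] using
    hline.le_slope_of_hasDerivAt (mem_univ 0) (mem_univ 1) zero_lt_one hderiv

theorem ConvexOn.inner_gradient_self (hf : ConvexOn ℝ univ f) (hd : DifferentiableAt ℝ f x)
    (hhom : ∀ t : ℝ, 0 < t → f (t • x) = t * f x) : ⟪∇ f x, x⟫ = f x := by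
  have hup := hf.inner_gradient_sub_le hd ((2 : ℝ) • x)
  have hdown := hf.inner_gradient_sub_le hd ((2⁻¹ : ℝ) • x)
  rw [hhom 2 two_pos, show (2 : ℝ) • x - x = x by module] at hup
  rw [hhom 2⁻¹ (by norm_num), show (2⁻¹ : ℝ) • x - x = (-2⁻¹ : ℝ) • x by module,
    real_inner_smul_right] at hdown
  linarith

theorem ConvexOn.inner_gradient_le (hf : ConvexOn ℝ univ f) (hd : DifferentiableAt ℝ f x)
    (hhom : ∀ t : ℝ, 0 < t → f (t • x) = t * f x) (y : E) : ⟪∇ f x, y⟫ ≤ f y := by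
  have := hf.inner_gradient_sub_le hd y
  rw [inner_sub_right, hf.inner_gradient_self hd hhom] at this
  linarith

theorem ConvexOn.gradient_ne_zero (hf : ConvexOn ℝ univ f) (hd : DifferentiableAt ℝ f x)
    (hhom : ∀ t : ℝ, 0 < t → f (t • x) = t * f x) (hpos : 0 < f x) : ∇ f x ≠ 0 := by
  intro h
  have := hf.inner_gradient_self hd hhom
  rw [h, inner_zero_left] at this
  exact hpos.ne this

theorem smul_gradient_eq_of_inner_le {c : ℝ} {w : E} (hd : DifferentiableAt ℝ f w)
    (hle : ∀ η, ⟪x, η⟫ ≤ c * f η) (heq : ⟪x, w⟫ = c * f w) : c • ∇ f w = x := by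
  have hmin : IsLocalMin (fun η => c * f η - ⟪x, η⟫) w :=
    Filter.Eventually.of_forall fun η => by simp only [heq, sub_self, sub_nonneg, hle η]
  have hcrit := hmin.hasFDerivAt_eq_zero
    ((hd.hasFDerivAt.const_mul c).sub (innerSL ℝ x).hasFDerivAt)
  refine ext_inner_right ℝ fun v => ?_
  have := congr($hcrit v)
  simp only [sub_apply, smul_apply, smul_eq_mul,
    innerSL_apply_apply, zero_apply, ← inner_gradient_left] at this
  rw [real_inner_smul_left]
  linarith

end Gradient

theorem map_zero_of_smul_pos {E : Type*} [AddCommGroup E] [Module ℝ E] {H : E → ℝ}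
    (hhom : ∀ t : ℝ, 0 < t → ∀ ξ, H (t • ξ) = t * H ξ) : H 0 = 0 := by
  have := hhom 2 two_pos 0
  rw [smul_zero] at this
  linarith

theorem pos_of_mul_norm_le {E : Type*} [NormedAddCommGroup E] {H : E → ℝ} {a : ℝ} (ha : 0 < a)
    (hlow : ∀ ξ, a * ‖ξ‖ ≤ H ξ) {ξ : E} (hξ : ξ ≠ 0) : 0 < H ξ :=
  (mul_pos ha (norm_pos_iff.mpr hξ)).trans_le (hlow ξ)

section PolarGauge

variable {n : ℕ} {H : EuclideanSpace ℝ (Fin n) → ℝ} {a : ℝ}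

theorem inner_div_le_polarGauge (ha : 0 < a) (hlow : ∀ ξ, a * ‖ξ‖ ≤ H ξ)
    (x : EuclideanSpace ℝ (Fin n)) {ξ : EuclideanSpace ℝ (Fin n)} (hξ : ξ ≠ 0) :
    ⟪x, ξ⟫ / H ξ ≤ polarGauge n H x := by
  refine le_csSup ⟨‖x‖ / a, ?_⟩ ⟨ξ, hξ, rfl⟩
  rintro _ ⟨η, hη, rfl⟩
  rw [div_le_div_iff₀ (pos_of_mul_norm_le ha hlow hη) ha]
  calc ⟪x, η⟫ * a ≤ ‖x‖ * ‖η‖ * a := by gcongr; exact real_inner_le_norm x η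
    _ = ‖x‖ * (a * ‖η‖) := by ring
    _ ≤ ‖x‖ * H η := by gcongr; exact hlow η

theorem inner_le_polarGauge_mul (ha : 0 < a) (hlow : ∀ ξ, a * ‖ξ‖ ≤ H ξ) (h0 : H 0 = 0)
    (x ξ : EuclideanSpace ℝ (Fin n)) : ⟪x, ξ⟫ ≤ polarGauge n H x * H ξ := by
  rcases eq_or_ne ξ 0 with rfl | hξ
  · simp [h0]
  · exact (div_le_iff₀ (pos_of_mul_norm_le ha hlow hξ)).mp (inner_div_le_polarGauge ha hlow x hξ)

theorem polarGauge_le_iff [Nontrivial (EuclideanSpace ℝ (Fin n))] (ha : 0 < a)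
    (hlow : ∀ ξ, a * ‖ξ‖ ≤ H ξ) (h0 : H 0 = 0) {x : EuclideanSpace ℝ (Fin n)} {c : ℝ} :
    polarGauge n H x ≤ c ↔ ∀ ξ, ⟪x, ξ⟫ ≤ c * H ξ := by
  refine ⟨fun hc ξ => ?_, fun h => ?_⟩
  · exact (inner_le_polarGauge_mul ha hlow h0 x ξ).trans
      (mul_le_mul_of_nonneg_right hc ((mul_nonneg ha.le (norm_nonneg ξ)).trans (hlow ξ)))
  · obtain ⟨ξ₀, hξ₀⟩ := exists_ne (0 : EuclideanSpace ℝ (Fin n))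
    refine csSup_le ⟨_, ξ₀, hξ₀, rfl⟩ ?_
    rintro _ ⟨ξ, hξ, rfl⟩
    exact (div_le_iff₀ (pos_of_mul_norm_le ha hlow hξ)).mpr (h ξ)

theorem convexOn_polarGauge [Nontrivial (EuclideanSpace ℝ (Fin n))] (ha : 0 < a)
    (hlow : ∀ ξ, a * ‖ξ‖ ≤ H ξ) (h0 : H 0 = 0) : ConvexOn ℝ univ (polarGauge n H) := by
  refine ⟨convex_univ, fun p _ q _ s t hs ht _ => (polarGauge_le_iff ha hlow h0).mpr fun ξ => ?_⟩
  have hp := inner_le_polarGauge_mul ha hlow h0 p ξ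
  have hq := inner_le_polarGauge_mul ha hlow h0 q ξ
  rw [inner_add_left, real_inner_smul_left, real_inner_smul_left, smul_eq_mul, smul_eq_mul]
  nlinarith

theorem polarGauge_smul_le [Nontrivial (EuclideanSpace ℝ (Fin n))] (ha : 0 < a)
    (hlow : ∀ ξ, a * ‖ξ‖ ≤ H ξ) (h0 : H 0 = 0) {t : ℝ} (ht : 0 ≤ t)
    (x : EuclideanSpace ℝ (Fin n)) : polarGauge n H (t • x) ≤ t * polarGauge n H x :=
  (polarGauge_le_iff ha hlow h0).mpr fun ξ => by
    rw [real_inner_smul_left, mul_assoc]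
    exact mul_le_mul_of_nonneg_left (inner_le_polarGauge_mul ha hlow h0 x ξ) ht

theorem polarGauge_smul [Nontrivial (EuclideanSpace ℝ (Fin n))] (ha : 0 < a)
    (hlow : ∀ ξ, a * ‖ξ‖ ≤ H ξ) (h0 : H 0 = 0) {t : ℝ} (ht : 0 < t)
    (x : EuclideanSpace ℝ (Fin n)) : polarGauge n H (t • x) = t * polarGauge n H x := by
  refine (polarGauge_smul_le ha hlow h0 ht.le x).antisymm ?_
  have := polarGauge_smul_le ha hlow h0 (inv_nonneg.mpr ht.le) (t • x)
  rw [inv_smul_smul₀ ht.ne'] at this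
  rwa [← le_inv_mul_iff₀ ht]

theorem polarGauge_pos (ha : 0 < a) (hlow : ∀ ξ, a * ‖ξ‖ ≤ H ξ)
    {x : EuclideanSpace ℝ (Fin n)} (hx : x ≠ 0) : 0 < polarGauge n H x := by
  refine lt_of_lt_of_le ?_ (inner_div_le_polarGauge ha hlow x hx)
  rw [real_inner_self_eq_norm_sq]
  exact div_pos (by positivity) (pos_of_mul_norm_le ha hlow hx)

theorem polarGauge_gradient_eq_one (ha : 0 < a) (hlow : ∀ ξ, a * ‖ξ‖ ≤ H ξ)
    (hconv : ConvexOn ℝ univ H) (hhom : ∀ t : ℝ, 0 < t → ∀ ξ, H (t • ξ) = t * H ξ)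
    {x : EuclideanSpace ℝ (Fin n)} (hx : x ≠ 0) (hd : DifferentiableAt ℝ H x) :
    polarGauge n H (∇ H x) = 1 := by
  have : Nontrivial (EuclideanSpace ℝ (Fin n)) := nontrivial_of_ne x 0 hx
  have h0 := map_zero_of_smul_pos hhom
  refine le_antisymm ((polarGauge_le_iff ha hlow h0).mpr fun ξ => ?_) ?_
  · rw [one_mul]
    exact hconv.inner_gradient_le hd (fun t ht => hhom t ht x) ξ
  · have := inner_le_polarGauge_mul ha hlow h0 (∇ H x) x
    rw [hconv.inner_gradient_self hd (fun t ht => hhom t ht x)] at this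
    exact (le_mul_iff_one_le_left (pos_of_mul_norm_le ha hlow hx)).mp this

theorem inner_gradient_polarGauge_le [Nontrivial (EuclideanSpace ℝ (Fin n))] (ha : 0 < a)
    (hlow : ∀ ξ, a * ‖ξ‖ ≤ H ξ) (h0 : H 0 = 0) {x : EuclideanSpace ℝ (Fin n)}
    (hd : DifferentiableAt ℝ (polarGauge n H) x) (y : EuclideanSpace ℝ (Fin n)) :
    ⟪∇ (polarGauge n H) x, y⟫ ≤ polarGauge n H y :=
  (convexOn_polarGauge ha hlow h0).inner_gradient_le hd
    (fun _ ht => polarGauge_smul ha hlow h0 ht x) y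

theorem inner_gradient_polarGauge_self [Nontrivial (EuclideanSpace ℝ (Fin n))] (ha : 0 < a)
    (hlow : ∀ ξ, a * ‖ξ‖ ≤ H ξ) (h0 : H 0 = 0) {x : EuclideanSpace ℝ (Fin n)}
    (hd : DifferentiableAt ℝ (polarGauge n H) x) :
    ⟪∇ (polarGauge n H) x, x⟫ = polarGauge n H x :=
  (convexOn_polarGauge ha hlow h0).inner_gradient_self hd
    (fun _ ht => polarGauge_smul ha hlow h0 ht x)

theorem gauge_gradient_polarGauge_eq_one (ha : 0 < a) (hlow : ∀ ξ, a * ‖ξ‖ ≤ H ξ)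
    (hconv : ConvexOn ℝ univ H) (hhom : ∀ t : ℝ, 0 < t → ∀ ξ, H (t • ξ) = t * H ξ)
    (hdH : ∀ ξ, ξ ≠ 0 → DifferentiableAt ℝ H ξ) {x : EuclideanSpace ℝ (Fin n)} (hx : x ≠ 0)
    (hdP : DifferentiableAt ℝ (polarGauge n H) x) : H (∇ (polarGauge n H) x) = 1 := by
  have : Nontrivial (EuclideanSpace ℝ (Fin n)) := nontrivial_of_ne x 0 hx
  have h0 := map_zero_of_smul_pos hhom
  have hPx := polarGauge_pos ha hlow hx
  set z := ∇ (polarGauge n H) x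
  have hz : z ≠ 0 := (convexOn_polarGauge ha hlow h0).gradient_ne_zero hdP
    (fun _ ht => polarGauge_smul ha hlow h0 ht x) hPx
  refine le_antisymm ?_ ?_
  · calc H z = ⟪∇ H z, z⟫ := (hconv.inner_gradient_self (hdH z hz) fun t ht => hhom t ht z).symm
      _ = ⟪z, ∇ H z⟫ := real_inner_comm _ _
      _ ≤ polarGauge n H (∇ H z) := inner_gradient_polarGauge_le ha hlow h0 hdP _
      _ = 1 := polarGauge_gradient_eq_one ha hlow hconv hhom hz (hdH z hz)
  · have := inner_le_polarGauge_mul ha hlow h0 x z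
    rw [real_inner_comm, inner_gradient_polarGauge_self ha hlow h0 hdP] at this
    exact (le_mul_iff_one_le_right hPx).mp this

end PolarGauge

theorem gauge_polar_gradient_identities_general (n : ℕ) (H : EuclideanSpace ℝ (Fin n) → ℝ) (a : ℝ)
    (ha : 0 < a)
    (hconv : ConvexOn ℝ univ H)
    (hhom : ∀ (t : ℝ) (ξ : EuclideanSpace ℝ (Fin n)), H (t • ξ) = |t| * H ξ)
    (hlow : ∀ ξ : EuclideanSpace ℝ (Fin n), a * ‖ξ‖ ≤ H ξ)
    (hsm : ContDiffOn ℝ 1 H {0}ᶜ)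
    (hsmo : ContDiffOn ℝ 1 (polarGauge n H) {0}ᶜ)
    (x : EuclideanSpace ℝ (Fin n)) (hx : x ≠ 0) :
    polarGauge n H x • gradient H (gradient (polarGauge n H) x) = x ∧
    H x • gradient (polarGauge n H) (gradient H x) = x := by
  have hhom' (t : ℝ) (ht : 0 < t) (ξ : EuclideanSpace ℝ (Fin n)) : H (t • ξ) = t * H ξ := by
    rw [hhom, abs_of_pos ht]
  have h0 := map_zero_of_smul_pos hhom'
  have : Nontrivial (EuclideanSpace ℝ (Fin n)) := nontrivial_of_ne x 0 hx
  have hdH : ∀ ξ, ξ ≠ 0 → DifferentiableAt ℝ H ξ := fun ξ hξ =>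
    (hsm.differentiableOn one_ne_zero).differentiableAt (isOpen_compl_singleton.mem_nhds hξ)
  have hdP : ∀ ξ, ξ ≠ 0 → DifferentiableAt ℝ (polarGauge n H) ξ := fun ξ hξ =>
    (hsmo.differentiableOn one_ne_zero).differentiableAt (isOpen_compl_singleton.mem_nhds hξ)
  have hHz := gauge_gradient_polarGauge_eq_one ha hlow hconv hhom' hdH hx (hdP x hx)
  have hz : ∇ (polarGauge n H) x ≠ 0 := fun h => by simp [h, h0] at hHz
  have hy : ∇ H x ≠ 0 :=
    hconv.gradient_ne_zero (hdH x hx) (fun t ht => hhom' t ht x) (pos_of_mul_norm_le ha hlow hx)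
  have hPy := polarGauge_gradient_eq_one ha hlow hconv hhom' hx (hdH x hx)
  constructor
  · refine smul_gradient_eq_of_inner_le (hdH _ hz) (inner_le_polarGauge_mul ha hlow h0 x) ?_
    rw [hHz, mul_one, real_inner_comm]
    exact inner_gradient_polarGauge_self ha hlow h0 (hdP x hx)
  · refine smul_gradient_eq_of_inner_le (hdP _ hy) (fun η => ?_) ?_
    · rw [real_inner_comm, mul_comm]
      exact inner_le_polarGauge_mul ha hlow h0 η x
    · rw [hPy, mul_one, real_inner_comm]
      exact hconv.inner_gradient_self (hdH x hx) fun t ht => hhom' t ht x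

theorem gauge_polar_gradient_identities (n : ℕ) (H : EuclideanSpace ℝ (Fin n) → ℝ) (a b : ℝ)
    (ha : 0 < a) (hab : a ≤ b)
    (hconv : ConvexOn ℝ univ H)
    (hhom : ∀ (t : ℝ) (ξ : EuclideanSpace ℝ (Fin n)), H (t • ξ) = |t| * H ξ)
    (hlow : ∀ ξ : EuclideanSpace ℝ (Fin n), a * ‖ξ‖ ≤ H ξ)
    (hup : ∀ ξ : EuclideanSpace ℝ (Fin n), H ξ ≤ b * ‖ξ‖)
    (hsm : ContDiffOn ℝ 1 H {0}ᶜ)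
    (hsc : ∀ t > 0, StrictConvex ℝ {ξ : EuclideanSpace ℝ (Fin n) | H ξ ≤ t})
    (hsmo : ContDiffOn ℝ 1 (polarGauge n H) {0}ᶜ)
    (x : EuclideanSpace ℝ (Fin n)) (hx : x ≠ 0) :
    polarGauge n H x • gradient H (gradient (polarGauge n H) x) = x ∧
    H x • gradient (polarGauge n H) (gradient H x) = x :=
  gauge_polar_gradient_identities_general n H a ha hconv hhom hlow hsm hsmo x hx
end

section
/- Let u, w be positive functions in H¹₀(Ω) ∩ C¹(Ω) and set φ = ((u² + w²)/2)^{1/2}. Then, pointwise where u and w are differentiable and positive, H(∇φ)² ≤ ½ H(∇u)² + ½ H(∇w)², where H is a convex absolutely one-homogeneous gauge function. Moreover equality forces ∇(log u) = ∇(log w) at that point, provided the sublevel sets of H are strictly convex. -/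
open MeasureTheory Set

/-!
Write `∇φ = l ∇u + m ∇w` with `l = u / (2φ)`, `m = w / (2φ)`, so that `l, m > 0` and
`l² + m² = 1/2`. Subadditivity and homogeneity of `H` give `H(∇φ) ≤ l H(∇u) + m H(∇w)`, and
Cauchy–Schwarz bounds the square of the right side by `½ H(∇u)² + ½ H(∇w)²`.

In the equality case both steps are equalities. Equality in Cauchy–Schwarz gives
`u H(∇w) = w H(∇u)`. Equality in the triangle inequality forces `∇u / H(∇u) = ∇w / H(∇w)`:
otherwise a proper convex combination of these two points of `{H = 1}` would lie in the interior
of the strictly convex ball `{H ≤ 1}`, where `H < 1`.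
-/

theorem sq_le_half_sq_add_half_sq_of_le {l m A B X : ℝ} (hlm : l ^ 2 + m ^ 2 = 1 / 2)
    (hX : 0 ≤ X) (hle : X ≤ l * A + m * B) : X ^ 2 ≤ 1 / 2 * A ^ 2 + 1 / 2 * B ^ 2 := by
  nlinarith [sq_nonneg (l * B - m * A)]

theorem eq_and_mul_eq_of_sq_eq_half_sq_add_half_sq {l m A B X : ℝ}
    (hlm : l ^ 2 + m ^ 2 = 1 / 2) (hX : 0 ≤ X) (hle : X ≤ l * A + m * B)
    (heq : X ^ 2 = 1 / 2 * A ^ 2 + 1 / 2 * B ^ 2) : X = l * A + m * B ∧ l * B = m * A := by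
  have hlagrange : (l * A + m * B) ^ 2 + (l * B - m * A) ^ 2 = 1 / 2 * A ^ 2 + 1 / 2 * B ^ 2 := by
    linear_combination (A ^ 2 + B ^ 2) * hlm
  have hsq : X ^ 2 ≤ (l * A + m * B) ^ 2 := pow_le_pow_left₀ hX hle 2
  refine ⟨le_antisymm hle ?_, by nlinarith [sq_nonneg (l * B - m * A)]⟩
  exact (pow_le_pow_iff_left₀ (hX.trans hle) hX two_ne_zero).mp
    (by nlinarith [sq_nonneg (l * B - m * A)])

open InnerProductSpace in
theorem hasGradientAt_sqrt_half_sq_add_sq {E : Type*} [NormedAddCommGroup E]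
    [InnerProductSpace ℝ E] [CompleteSpace E] {u w : E → ℝ} {x : E}
    (hu : DifferentiableAt ℝ u x) (hw : DifferentiableAt ℝ w x)
    (hx : (u x ^ 2 + w x ^ 2) / 2 ≠ 0) :
    HasGradientAt (fun y => √((u y ^ 2 + w y ^ 2) / 2))
      ((u x / (2 * √((u x ^ 2 + w x ^ 2) / 2))) • gradient u x +
        (w x / (2 * √((u x ^ 2 + w x ^ 2) / 2))) • gradient w x) x := by
  have hsq : HasFDerivAt (fun y => (u y ^ 2 + w y ^ 2) / 2)
      (u x • fderiv ℝ u x + w x • fderiv ℝ w x) x := by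
    refine (((hu.hasFDerivAt.pow 2).add (hw.hasFDerivAt.pow 2)).mul_const 2⁻¹).congr_fderiv ?_
    ext v
    simp only [Nat.add_one_sub_one, pow_one, nsmul_eq_mul, Nat.cast_ofNat, smul_add, add_apply,
      smul_apply, smul_eq_mul]
    ring
  rw [hasGradientAt_iff_hasFDerivAt]
  refine ((Real.hasDerivAt_sqrt hx).comp_hasFDerivAt x hsq).congr_fderiv ?_
  rw [map_add, map_smul, map_smul, toDual_gradient, toDual_gradient]
  generalize √((u x ^ 2 + w x ^ 2) / 2) = s
  ext v
  simp only [add_apply, smul_apply, smul_eq_mul]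
  ring

section Gauge

variable {E : Type*} [AddCommGroup E] [Module ℝ E] {H : E → ℝ}

theorem ConvexOn.apply_add_le_of_abs_homogeneous (hconv : ConvexOn ℝ univ H)
    (hhom : ∀ (t : ℝ) (ξ : E), H (t • ξ) = |t| * H ξ) (ξ η : E) :
    H (ξ + η) ≤ H ξ + H η := by
  have hmid := hconv.2 (mem_univ ξ) (mem_univ η) (by norm_num : (0 : ℝ) ≤ 1 / 2)
    (by norm_num : (0 : ℝ) ≤ 1 / 2) (by norm_num)
  have hdouble : ξ + η = (2 : ℝ) • ((1 / 2 : ℝ) • ξ + (1 / 2 : ℝ) • η) := by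
    rw [smul_add, smul_smul, smul_smul]; norm_num
  rw [hdouble, hhom, abs_two]
  simp only [smul_eq_mul] at hmid
  linarith

theorem lt_one_of_mem_interior_setOf_le_one [TopologicalSpace E] [ContinuousSMul ℝ E]
    (hhom : ∀ (t : ℝ) (ξ : E), H (t • ξ) = |t| * H ξ) {z : E}
    (hz : z ∈ interior {ξ | H ξ ≤ 1}) : H z < 1 := by
  have hnear : ∀ᶠ c in nhds (1 : ℝ), c • z ∈ {ξ | H ξ ≤ 1} :=
    (continuous_id.smul continuous_const).continuousAt.preimage_mem_nhds
      (by simpa using mem_interior_iff_mem_nhds.mp hz)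
  obtain ⟨c, hcz, hc⟩ := (hnear.filter_mono nhdsWithin_le_nhds).and
    (self_mem_nhdsWithin (s := Ioi 1)) |>.exists
  have hc : 1 < c := hc
  replace hcz : c * H z ≤ 1 := by rwa [← abs_of_pos (one_pos.trans hc), ← hhom]
  by_contra! h1
  nlinarith

theorem inv_smul_eq_inv_smul_of_apply_add_eq [TopologicalSpace E] [ContinuousSMul ℝ E]
    (hsc : StrictConvex ℝ {ξ | H ξ ≤ 1}) (hhom : ∀ (t : ℝ) (ξ : E), H (t • ξ) = |t| * H ξ)
    {l m : ℝ} (hl : 0 < l) (hm : 0 < m) {ξ η : E} (hξ : 0 < H ξ) (hη : 0 < H η)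
    (heq : H (l • ξ + m • η) = l * H ξ + m * H η) : (H ξ)⁻¹ • ξ = (H η)⁻¹ • η := by
  by_contra hne
  set S := l * H ξ + m * H η
  have hS : 0 < S := by positivity
  have hunit : ∀ ζ, 0 < H ζ → (H ζ)⁻¹ • ζ ∈ {ξ | H ξ ≤ 1} := fun ζ hζ =>
    (by rw [hhom, abs_of_pos (inv_pos.2 hζ), inv_mul_cancel₀ hζ.ne'] : H ((H ζ)⁻¹ • ζ) ≤ 1)
  have hmid := hsc (hunit ξ hξ) (hunit η hη) hne (a := l * H ξ / S) (b := m * H η / S)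
    (by positivity) (by positivity) (by rw [← add_div, div_self hS.ne'])
  have hsplit : l • ξ + m • η =
      S • ((l * H ξ / S) • (H ξ)⁻¹ • ξ + (m * H η / S) • (H η)⁻¹ • η) := by
    simp only [smul_add, smul_smul]
    congr 2 <;> field_simp
  have hlt := lt_one_of_mem_interior_setOf_le_one hhom hmid
  rw [hsplit, hhom, abs_of_pos hS] at heq
  nlinarith

theorem inv_smul_eq_inv_smul_of_apply_add_eq_of_mul_eq [TopologicalSpace E]
    [ContinuousSMul ℝ E] (hsc : StrictConvex ℝ {ξ | H ξ ≤ 1})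
    (hhom : ∀ (t : ℝ) (ξ : E), H (t • ξ) = |t| * H ξ) (hnonneg : ∀ ξ, 0 ≤ H ξ)
    (hdef : ∀ ξ, H ξ = 0 → ξ = 0) {l m : ℝ} (hl : 0 < l) (hm : 0 < m) {ξ η : E}
    (heq : H (l • ξ + m • η) = l * H ξ + m * H η) (hratio : l * H η = m * H ξ) :
    l⁻¹ • ξ = m⁻¹ • η := by
  by_cases hξ0 : H ξ = 0
  · have hη0 : H η = 0 := by simpa [hξ0, hl.ne'] using hratio
    simp [hdef ξ hξ0, hdef η hη0]
  have hξ : 0 < H ξ := (hnonneg ξ).lt_of_ne' hξ0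
  have hη : 0 < H η := by nlinarith
  calc l⁻¹ • ξ = (l⁻¹ * H ξ) • ((H ξ)⁻¹ • ξ) := by
        rw [smul_smul, mul_assoc, mul_inv_cancel₀ hξ0, mul_one]
    _ = (m⁻¹ * H η) • ((H η)⁻¹ • η) := by
        rw [inv_smul_eq_inv_smul_of_apply_add_eq hsc hhom hl hm hξ hη heq]
        congr 1
        field_simp
        linarith
    _ = m⁻¹ • η := by
        rw [smul_smul, mul_assoc, mul_inv_cancel₀ hη.ne', mul_one]

end Gauge

theorem pointwise_convexity_inequality_general (n : ℕ) (H : EuclideanSpace ℝ (Fin n) → ℝ) (a : ℝ)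
    (ha : 0 < a)
    (hconv : ConvexOn ℝ univ H)
    (hhom : ∀ (t : ℝ) (ξ : EuclideanSpace ℝ (Fin n)), H (t • ξ) = |t| * H ξ)
    (hlow : ∀ ξ : EuclideanSpace ℝ (Fin n), a * ‖ξ‖ ≤ H ξ)
    (hsc : ∀ t > 0, StrictConvex ℝ {ξ : EuclideanSpace ℝ (Fin n) | H ξ ≤ t})
    (u w : EuclideanSpace ℝ (Fin n) → ℝ) (x : EuclideanSpace ℝ (Fin n))
    (hux : 0 < u x) (hwx : 0 < w x)
    (hud : DifferentiableAt ℝ u x) (hwd : DifferentiableAt ℝ w x)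
    (φ : EuclideanSpace ℝ (Fin n) → ℝ)
    (hφ : φ = fun y => Real.sqrt ((u y ^ 2 + w y ^ 2) / 2)) :
    (H (gradient φ x)) ^ 2 ≤ (1 / 2) * (H (gradient u x)) ^ 2 + (1 / 2) * (H (gradient w x)) ^ 2 ∧
    ((H (gradient φ x)) ^ 2 = (1 / 2) * (H (gradient u x)) ^ 2 + (1 / 2) * (H (gradient w x)) ^ 2 →
      (u x)⁻¹ • gradient u x = (w x)⁻¹ • gradient w x) := by
  subst hφ
  rw [(hasGradientAt_sqrt_half_sq_add_sq hud hwd (by positivity)).gradient]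
  set s := √((u x ^ 2 + w x ^ 2) / 2)
  have hs : 0 < s := by positivity
  set l := u x / (2 * s)
  set m := w x / (2 * s)
  set g := gradient u x
  set h := gradient w x
  have hlm : l ^ 2 + m ^ 2 = 1 / 2 := by
    have hs2 : s ^ 2 = (u x ^ 2 + w x ^ 2) / 2 := Real.sq_sqrt (by positivity)
    rw [div_pow, div_pow, ← add_div, mul_pow, hs2]
    field_simp
  have hnonneg : ∀ ξ, 0 ≤ H ξ := fun ξ => le_trans (by positivity) (hlow ξ)
  have hdef : ∀ ξ, H ξ = 0 → ξ = 0 := fun ξ hξ =>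
    norm_eq_zero.mp (le_antisymm (by nlinarith [hlow ξ, norm_nonneg ξ]) (norm_nonneg ξ))
  have htri : H (l • g + m • h) ≤ l * H g + m * H h := by
    simpa only [hhom, abs_of_pos (by positivity : 0 < l), abs_of_pos (by positivity : 0 < m)]
      using hconv.apply_add_le_of_abs_homogeneous hhom (l • g) (m • h)
  refine ⟨sq_le_half_sq_add_half_sq_of_le hlm (hnonneg _) htri, fun heq => ?_⟩
  obtain ⟨htri_eq, hratio⟩ := eq_and_mul_eq_of_sq_eq_half_sq_add_half_sq hlm (hnonneg _) htri heq
  have hdir := inv_smul_eq_inv_smul_of_apply_add_eq_of_mul_eq (hsc 1 one_pos) hhom hnonneg hdef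
    (by positivity) (by positivity) htri_eq hratio
  simp only [l, m, inv_div] at hdir
  apply smul_right_injective _ (mul_pos two_pos hs).ne'
  simpa only [smul_smul, div_eq_mul_inv] using hdir

theorem pointwise_convexity_inequality (n : ℕ) (H : EuclideanSpace ℝ (Fin n) → ℝ) (a b : ℝ)
    (ha : 0 < a) (hab : a ≤ b)
    (hconv : ConvexOn ℝ univ H)
    (hhom : ∀ (t : ℝ) (ξ : EuclideanSpace ℝ (Fin n)), H (t • ξ) = |t| * H ξ)
    (hlow : ∀ ξ : EuclideanSpace ℝ (Fin n), a * ‖ξ‖ ≤ H ξ)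
    (hup : ∀ ξ : EuclideanSpace ℝ (Fin n), H ξ ≤ b * ‖ξ‖)
    (hsc : ∀ t > 0, StrictConvex ℝ {ξ : EuclideanSpace ℝ (Fin n) | H ξ ≤ t})
    (u w : EuclideanSpace ℝ (Fin n) → ℝ) (x : EuclideanSpace ℝ (Fin n))
    (hux : 0 < u x) (hwx : 0 < w x)
    (hud : DifferentiableAt ℝ u x) (hwd : DifferentiableAt ℝ w x)
    (φ : EuclideanSpace ℝ (Fin n) → ℝ)
    (hφ : φ = fun y => Real.sqrt ((u y ^ 2 + w y ^ 2) / 2)) :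
    (H (gradient φ x)) ^ 2 ≤ (1 / 2) * (H (gradient u x)) ^ 2 + (1 / 2) * (H (gradient w x)) ^ 2 ∧
    ((H (gradient φ x)) ^ 2 = (1 / 2) * (H (gradient u x)) ^ 2 + (1 / 2) * (H (gradient w x)) ^ 2 →
      (u x)⁻¹ • gradient u x = (w x)⁻¹ • gradient w x) :=
  pointwise_convexity_inequality_general n H a ha hconv hhom hlow hsc u w x hux hwx hud hwd φ hφ
end

section
/- Let Ω be a bounded open set and suppose λ(α,Ω) → L as α → +∞ (the limit exists by monotonicity and boundedness). Then L = λ^T(Ω), the first twisted eigenvalue: lim_{α→+∞} λ(α,Ω) = inf{ ∫_Ω H(∇u)² / ∫_Ω u² : u ∈ H¹₀(Ω), u ≢ 0, ∫_Ω u = 0 }. -/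
open MeasureTheory Set

noncomputable def rayleighQ (n : ℕ) (H : EuclideanSpace ℝ (Fin n) → ℝ) (α : ℝ)
    (Ω : Set (EuclideanSpace ℝ (Fin n))) (u : EuclideanSpace ℝ (Fin n) → ℝ) : ℝ :=
  ((∫ x in Ω, (H (gradient u x)) ^ 2) + α * (∫ x in Ω, u x) ^ 2) / ∫ x in Ω, (u x) ^ 2

def testFun (n : ℕ) (Ω : Set (EuclideanSpace ℝ (Fin n)))
    (u : EuclideanSpace ℝ (Fin n) → ℝ) : Prop :=
  ContDiff ℝ 1 u ∧ HasCompactSupport u ∧ tsupport u ⊆ Ω ∧ u ≠ 0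

noncomputable def eigenInf (n : ℕ) (H : EuclideanSpace ℝ (Fin n) → ℝ) (α : ℝ)
    (Ω : Set (EuclideanSpace ℝ (Fin n))) : ℝ :=
  sInf {q : ℝ | ∃ u, testFun n Ω u ∧ q = rayleighQ n H α Ω u}

/-- First twisted Dirichlet eigenvalue. -/
noncomputable def twistedInf (n : ℕ) (H : EuclideanSpace ℝ (Fin n) → ℝ)
    (Ω : Set (EuclideanSpace ℝ (Fin n))) : ℝ :=
  sInf {q : ℝ | ∃ u, testFun n Ω u ∧ (∫ x in Ω, u x) = 0 ∧
    q = (∫ x in Ω, (H (gradient u x)) ^ 2) / ∫ x in Ω, (u x) ^ 2}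

/-!
Restricted to mean-zero functions the penalty term vanishes, which gives `L ≤ λ^T`. Conversely,
fix `φ` with `∫ φ = 1`. If `u` nearly realises `λ(α) ≤ L`, the penalty forces
`(∫ u)² ≤ (L + o(1)) ‖u‖₂² / α`, so `v = u - (∫ u) φ` is a mean-zero competitor whose energy and
mass differ from those of `u` by factors `1 + o(1)` as `α → ∞`; subadditivity of the convex,
absolutely homogeneous `H` controls `H (∇v)` pointwise by `H (∇u) + |∫ u| H (∇φ)`.
-/

open Filter Topology

section Gauge

variable {E : Type*} [AddCommGroup E] [Module ℝ E] {H : E → ℝ}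

lemma map_zero_of_abs_homogeneous (hhom : ∀ (t : ℝ) (ξ : E), H (t • ξ) = |t| * H ξ) :
    H 0 = 0 := by
  simpa using hhom 0 0

lemma map_add_le_of_convexOn (hconv : ConvexOn ℝ univ H)
    (hhom : ∀ (t : ℝ) (ξ : E), H (t • ξ) = |t| * H ξ) (x y : E) :
    H (x + y) ≤ H x + H y := by
  have h := hconv.2 (mem_univ x) (mem_univ y) (by norm_num : (0 : ℝ) ≤ 1 / 2)
    (by norm_num : (0 : ℝ) ≤ 1 / 2) (by norm_num)
  rw [← smul_add, hhom, smul_eq_mul, smul_eq_mul] at h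
  norm_num at h
  linarith

lemma nonneg_of_convexOn (hconv : ConvexOn ℝ univ H)
    (hhom : ∀ (t : ℝ) (ξ : E), H (t • ξ) = |t| * H ξ) (ξ : E) : 0 ≤ H ξ := by
  have hneg : H (-ξ) = H ξ := by simpa using hhom (-1) ξ
  have h := map_add_le_of_convexOn hconv hhom ξ (-ξ)
  rw [add_neg_cancel, map_zero_of_abs_homogeneous hhom, hneg] at h
  linarith

lemma map_sub_smul_le_of_convexOn (hconv : ConvexOn ℝ univ H)
    (hhom : ∀ (t : ℝ) (ξ : E), H (t • ξ) = |t| * H ξ) (x y : E) (c : ℝ) :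
    H (x - c • y) ≤ H x + |c| * H y := by
  simpa [sub_eq_add_neg, ← neg_smul, hhom] using map_add_le_of_convexOn hconv hhom x (-c • y)

end Gauge

lemma two_mul_le_mul_sq_add_inv_mul_sq {t : ℝ} (ht : 0 < t) (x y : ℝ) :
    2 * x * y ≤ t * x ^ 2 + t⁻¹ * y ^ 2 := by
  have h : 0 ≤ (t * x - y) ^ 2 / t := by positivity
  have e : (t * x - y) ^ 2 / t = t * x ^ 2 - 2 * x * y + t⁻¹ * y ^ 2 := by
    field_simp
    ring
  linarith

lemma add_sq_le_of_pos {t : ℝ} (ht : 0 < t) (x y : ℝ) :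
    (x + y) ^ 2 ≤ (1 + t) * x ^ 2 + (1 + t⁻¹) * y ^ 2 := by
  linear_combination two_mul_le_mul_sq_add_inv_mul_sq ht x y

lemma sub_sq_ge_of_pos {t : ℝ} (ht : 0 < t) (x y : ℝ) :
    (1 - t) * x ^ 2 - t⁻¹ * y ^ 2 ≤ (x - y) ^ 2 := by
  nlinarith [two_mul_le_mul_sq_add_inv_mul_sq ht x y, sq_nonneg y]

section CompactSupport

variable {X : Type*} [TopologicalSpace X] {f : X → ℝ}

lemma HasCompactSupport.sq (hf : HasCompactSupport f) : HasCompactSupport fun x => f x ^ 2 :=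
  hf.comp_left (g := fun r : ℝ => r ^ 2) (by simp)

lemma Continuous.integrable_sq_of_hasCompactSupport [MeasurableSpace X] [OpensMeasurableSpace X]
    {μ : Measure X} [IsFiniteMeasureOnCompacts μ] (hf : Continuous f) (hcf : HasCompactSupport f) :
    Integrable (fun x => f x ^ 2) μ :=
  (hf.pow 2).integrable_of_hasCompactSupport hcf.sq

end CompactSupport

section Gradient

variable {F : Type*} [NormedAddCommGroup F] [InnerProductSpace ℝ F] [CompleteSpace F]
  {u φ : F → ℝ}

lemma continuous_gradient (hu : ContDiff ℝ 1 u) : Continuous (gradient u) :=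
  (InnerProductSpace.toDual ℝ F).symm.continuous.comp (hu.continuous_fderiv one_ne_zero)

lemma hasCompactSupport_gradient (hu : HasCompactSupport u) : HasCompactSupport (gradient u) :=
  hu.fderiv (𝕜 := ℝ) |>.comp_left (map_zero _)

lemma gradient_sub_const_mul (hu : ContDiff ℝ 1 u) (hφ : ContDiff ℝ 1 φ) (c : ℝ) (x : F) :
    gradient (fun y => u y - c * φ y) x = gradient u x - c • gradient φ x := by
  have hφx : DifferentiableAt ℝ φ x := hφ.differentiable one_ne_zero x
  rw [gradient, fderiv_fun_sub (hu.differentiable one_ne_zero x) (hφx.const_mul c),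
    fderiv_const_mul hφx c, map_sub, map_smul]
  rfl

lemma integrable_sq_comp_gradient [MeasurableSpace F] [OpensMeasurableSpace F] {μ : Measure F}
    [IsFiniteMeasureOnCompacts μ] {H : F → ℝ} (hH : Continuous H) (hH0 : H 0 = 0)
    (hu : ContDiff ℝ 1 u) (hcu : HasCompactSupport u) :
    Integrable (fun x => H (gradient u x) ^ 2) μ :=
  (hH.comp (continuous_gradient hu)).integrable_sq_of_hasCompactSupport
    ((hasCompactSupport_gradient hcu).comp_left hH0)

end Gradient

namespace testFun

variable {n : ℕ} {Ω : Set (EuclideanSpace ℝ (Fin n))} {u φ : EuclideanSpace ℝ (Fin n) → ℝ}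

lemma setIntegral_sq_pos (hu : testFun n Ω u) : 0 < ∫ x in Ω, u x ^ 2 := by
  obtain ⟨x, hx⟩ := Function.ne_iff.mp hu.2.2.2
  rw [setIntegral_eq_integral_of_forall_compl_eq_zero fun y hy => by
    simp [image_eq_zero_of_notMem_tsupport fun h => hy (hu.2.2.1 h)]]
  exact (hu.1.continuous.pow 2).integral_pos_of_hasCompactSupport_nonneg_nonzero hu.2.1.sq
    (fun y => sq_nonneg (u y)) (pow_ne_zero 2 hx)

lemma contDiff_sub_const_mul (hu : testFun n Ω u) (hφ : testFun n Ω φ) (c : ℝ) :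
    ContDiff ℝ 1 fun x => u x - c * φ x :=
  hu.1.sub (contDiff_const.mul hφ.1)

lemma hasCompactSupport_sub_const_mul (hu : testFun n Ω u) (hφ : testFun n Ω φ) (c : ℝ) :
    HasCompactSupport fun x => u x - c * φ x :=
  hu.2.1.sub (hφ.2.1.mul_left (f := fun _ => c))

lemma sub_const_mul (hu : testFun n Ω u) (hφ : testFun n Ω φ) (c : ℝ)
    (hne : (fun x => u x - c * φ x) ≠ 0) : testFun n Ω fun x => u x - c * φ x :=
  ⟨contDiff_sub_const_mul hu hφ c, hasCompactSupport_sub_const_mul hu hφ c,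
    (tsupport_sub _ _).trans <| union_subset hu.2.2.1 <|
      (tsupport_mul_subset_right (f := fun _ => c)).trans hφ.2.2.1, hne⟩

lemma exists_setIntegral_eq_one (hΩo : IsOpen Ω) (hΩne : Ω.Nonempty) :
    ∃ φ, testFun n Ω φ ∧ ∫ x in Ω, φ x = 1 := by
  obtain ⟨x₀, hx₀⟩ := hΩne
  obtain ⟨ε, hε, hball⟩ := Metric.isOpen_iff.mp hΩo x₀ hx₀
  let f : ContDiffBump x₀ := ⟨ε / 3, ε / 2, by positivity, by linarith⟩
  have hsub : tsupport (f.normed volume) ⊆ Ω := by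
    rw [f.tsupport_normed_eq]
    exact (Metric.closedBall_subset_ball (by change ε / 2 < ε; linarith)).trans hball
  have hint : ∫ x in Ω, f.normed volume x = 1 := by
    rw [setIntegral_eq_integral_of_forall_compl_eq_zero fun y hy =>
      image_eq_zero_of_notMem_tsupport fun h => hy (hsub h)]
    exact f.integral_normed
  refine ⟨f.normed volume, ⟨f.contDiff_normed, f.hasCompactSupport_normed, hsub, ?_⟩, hint⟩
  rintro h
  simp [h] at hint

end testFun

section Rayleigh

variable {n : ℕ} {H : EuclideanSpace ℝ (Fin n) → ℝ} {Ω : Set (EuclideanSpace ℝ (Fin n))}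
  {u : EuclideanSpace ℝ (Fin n) → ℝ} {α β : ℝ}

lemma rayleighQ_nonneg (hα : 0 ≤ α) : 0 ≤ rayleighQ n H α Ω u :=
  div_nonneg (add_nonneg (integral_nonneg fun _ => sq_nonneg _) (mul_nonneg hα (sq_nonneg _)))
    (integral_nonneg fun _ => sq_nonneg _)

lemma rayleighQ_mono (hαβ : α ≤ β) : rayleighQ n H α Ω u ≤ rayleighQ n H β Ω u :=
  div_le_div_of_nonneg_right (by gcongr) (integral_nonneg fun _ => sq_nonneg _)

lemma rayleighQ_eq_of_setIntegral_eq_zero (h : ∫ x in Ω, u x = 0) (α : ℝ) :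
    rayleighQ n H α Ω u = (∫ x in Ω, H (gradient u x) ^ 2) / ∫ x in Ω, u x ^ 2 := by
  simp [rayleighQ, h]

lemma eigenInf_le_rayleighQ (hα : 0 ≤ α) (hu : testFun n Ω u) :
    eigenInf n H α Ω ≤ rayleighQ n H α Ω u :=
  csInf_le ⟨0, by rintro _ ⟨v, -, rfl⟩; exact rayleighQ_nonneg hα⟩ ⟨u, hu, rfl⟩

lemma exists_rayleighQ_lt (hΩo : IsOpen Ω) (hΩne : Ω.Nonempty) {p : ℝ}
    (h : eigenInf n H α Ω < p) : ∃ u, testFun n Ω u ∧ rayleighQ n H α Ω u < p := by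
  obtain ⟨φ, hφ, -⟩ := testFun.exists_setIntegral_eq_one hΩo hΩne
  obtain ⟨_, ⟨u, hu, rfl⟩, hlt⟩ := exists_lt_of_csInf_lt (by exact ⟨_, φ, hφ, rfl⟩) h
  exact ⟨u, hu, hlt⟩

lemma eigenInf_monotoneOn (hΩo : IsOpen Ω) (hΩne : Ω.Nonempty) :
    MonotoneOn (fun α => eigenInf n H α Ω) (Ici 0) := by
  intro α hα β _ hαβ
  obtain ⟨φ, hφ, -⟩ := testFun.exists_setIntegral_eq_one hΩo hΩne
  refine le_csInf ⟨_, φ, hφ, rfl⟩ ?_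
  rintro _ ⟨u, hu, rfl⟩
  exact (eigenInf_le_rayleighQ hα hu).trans (rayleighQ_mono hαβ)

lemma twistedInf_le (hu : testFun n Ω u) (h : ∫ x in Ω, u x = 0) :
    twistedInf n H Ω ≤ (∫ x in Ω, H (gradient u x) ^ 2) / ∫ x in Ω, u x ^ 2 :=
  csInf_le ⟨0, by rintro _ ⟨v, -, -, rfl⟩; positivity⟩ ⟨u, hu, h, rfl⟩

end Rayleigh

section Correction

variable {n : ℕ} {H : EuclideanSpace ℝ (Fin n) → ℝ} {Ω : Set (EuclideanSpace ℝ (Fin n))}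
  {u φ : EuclideanSpace ℝ (Fin n) → ℝ} {t : ℝ}

lemma setIntegral_sub_const_mul (hu : testFun n Ω u) (hφ : testFun n Ω φ) (c : ℝ) :
    ∫ x in Ω, (u x - c * φ x) = (∫ x in Ω, u x) - c * ∫ x in Ω, φ x := by
  have hiu : IntegrableOn u Ω :=
    (hu.1.continuous.integrable_of_hasCompactSupport hu.2.1).integrableOn
  have hiφ : IntegrableOn φ Ω :=
    (hφ.1.continuous.integrable_of_hasCompactSupport hφ.2.1).integrableOn
  rw [integral_sub hiu (hiφ.const_mul c), integral_const_mul]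

lemma setIntegral_sq_sub_const_mul_ge (hu : testFun n Ω u) (hφ : testFun n Ω φ) (c : ℝ)
    (ht : 0 < t) :
    (1 - t) * (∫ x in Ω, u x ^ 2) - t⁻¹ * c ^ 2 * ∫ x in Ω, φ x ^ 2 ≤
      ∫ x in Ω, (u x - c * φ x) ^ 2 := by
  have hiu : IntegrableOn (fun x => u x ^ 2) Ω :=
    (hu.1.continuous.integrable_sq_of_hasCompactSupport hu.2.1).integrableOn
  have hiφ : IntegrableOn (fun x => φ x ^ 2) Ω :=
    (hφ.1.continuous.integrable_sq_of_hasCompactSupport hφ.2.1).integrableOn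
  have hiv : IntegrableOn (fun x => (u x - c * φ x) ^ 2) Ω :=
    ((hu.contDiff_sub_const_mul hφ c).continuous.integrable_sq_of_hasCompactSupport
      (hu.hasCompactSupport_sub_const_mul hφ c)).integrableOn
  rw [← integral_const_mul, ← integral_const_mul, ← integral_sub (hiu.const_mul _)
    (hiφ.const_mul _)]
  refine integral_mono ((hiu.const_mul _).sub (hiφ.const_mul _)) hiv fun x => ?_
  simpa only [mul_pow, mul_assoc] using sub_sq_ge_of_pos ht (u x) (c * φ x)

lemma setIntegral_gauge_gradient_sub_const_mul_le (hconv : ConvexOn ℝ univ H)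
    (hhom : ∀ (t : ℝ) (ξ : EuclideanSpace ℝ (Fin n)), H (t • ξ) = |t| * H ξ)
    (hu : testFun n Ω u) (hφ : testFun n Ω φ) (c : ℝ) (ht : 0 < t) :
    ∫ x in Ω, H (gradient (fun y => u y - c * φ y) x) ^ 2 ≤
      (1 + t) * (∫ x in Ω, H (gradient u x) ^ 2) +
        (1 + t⁻¹) * c ^ 2 * ∫ x in Ω, H (gradient φ x) ^ 2 := by
  have hH : Continuous H := hconv.locallyLipschitz.continuous
  have hH0 := map_zero_of_abs_homogeneous hhom
  have hiu : IntegrableOn (fun x => H (gradient u x) ^ 2) Ω :=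
    (integrable_sq_comp_gradient hH hH0 hu.1 hu.2.1).integrableOn
  have hiφ : IntegrableOn (fun x => H (gradient φ x) ^ 2) Ω :=
    (integrable_sq_comp_gradient hH hH0 hφ.1 hφ.2.1).integrableOn
  have hiv : IntegrableOn (fun x => H (gradient (fun y => u y - c * φ y) x) ^ 2) Ω :=
    (integrable_sq_comp_gradient hH hH0 (hu.contDiff_sub_const_mul hφ c)
      (hu.hasCompactSupport_sub_const_mul hφ c)).integrableOn
  rw [← integral_const_mul, ← integral_const_mul, ← integral_add (hiu.const_mul _)
    (hiφ.const_mul _)]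
  refine integral_mono hiv ((hiu.const_mul _).add (hiφ.const_mul _)) fun x => ?_
  calc H (gradient (fun y => u y - c * φ y) x) ^ 2
      ≤ (H (gradient u x) + |c| * H (gradient φ x)) ^ 2 := by
        rw [gradient_sub_const_mul hu.1 hφ.1]
        exact pow_le_pow_left₀ (nonneg_of_convexOn hconv hhom _)
          (map_sub_smul_le_of_convexOn hconv hhom _ _ _) 2
    _ ≤ (1 + t) * H (gradient u x) ^ 2 + (1 + t⁻¹) * (|c| * H (gradient φ x)) ^ 2 :=
        add_sq_le_of_pos ht _ _
    _ = _ := by rw [mul_pow, sq_abs, mul_assoc]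

end Correction

section Limit

variable {n : ℕ} {H : EuclideanSpace ℝ (Fin n) → ℝ} {Ω : Set (EuclideanSpace ℝ (Fin n))}
  {u φ : EuclideanSpace ℝ (Fin n) → ℝ}

lemma setIntegral_bounds_of_rayleighQ_lt {α p : ℝ} (hα : 0 ≤ α) (hu : testFun n Ω u)
    (h : rayleighQ n H α Ω u < p) :
    ∫ x in Ω, H (gradient u x) ^ 2 ≤ p * ∫ x in Ω, u x ^ 2 ∧
      α * (∫ x in Ω, u x) ^ 2 ≤ p * ∫ x in Ω, u x ^ 2 := by
  rw [rayleighQ, div_lt_iff₀ hu.setIntegral_sq_pos] at h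
  have hN : 0 ≤ ∫ x in Ω, H (gradient u x) ^ 2 := integral_nonneg fun _ => sq_nonneg _
  have hM : 0 ≤ α * (∫ x in Ω, u x) ^ 2 := by positivity
  constructor <;> linarith

theorem exists_mean_zero_quotient_le (hconv : ConvexOn ℝ univ H)
    (hhom : ∀ (t : ℝ) (ξ : EuclideanSpace ℝ (Fin n)), H (t • ξ) = |t| * H ξ)
    (hu : testFun n Ω u) (hφ : testFun n Ω φ) (hφ1 : ∫ x in Ω, φ x = 1) {t p s : ℝ}
    (ht : 0 < t) (hN : ∫ x in Ω, H (gradient u x) ^ 2 ≤ p * ∫ x in Ω, u x ^ 2)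
    (hM : (∫ x in Ω, u x) ^ 2 ≤ s * t * ∫ x in Ω, u x ^ 2)
    (hden : 0 < 1 - t - s * ∫ x in Ω, φ x ^ 2) :
    ∃ v, testFun n Ω v ∧ ∫ x in Ω, v x = 0 ∧
      (∫ x in Ω, H (gradient v x) ^ 2) / ∫ x in Ω, v x ^ 2 ≤
        (1 + t) * (p + s * ∫ x in Ω, H (gradient φ x) ^ 2) / (1 - t - s * ∫ x in Ω, φ x ^ 2) := by
  set c := ∫ x in Ω, u x
  set d := ∫ x in Ω, u x ^ 2
  set A := ∫ x in Ω, H (gradient φ x) ^ 2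
  set B := ∫ x in Ω, φ x ^ 2
  have hd : 0 < d := hu.setIntegral_sq_pos
  have hA : 0 ≤ A := integral_nonneg fun _ => sq_nonneg _
  have hB : 0 ≤ B := integral_nonneg fun _ => sq_nonneg _
  have hct : t⁻¹ * c ^ 2 ≤ s * d :=
    calc t⁻¹ * c ^ 2 ≤ t⁻¹ * (s * t * d) := by gcongr
      _ = s * d := by field_simp
  have henergy : ∫ x in Ω, H (gradient (fun y => u y - c * φ y) x) ^ 2 ≤
      d * ((1 + t) * (p + s * A)) := by
    have hc : (1 + t⁻¹) * c ^ 2 ≤ (1 + t) * (s * d) := by linarith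
    calc _ ≤ (1 + t) * (∫ x in Ω, H (gradient u x) ^ 2) + (1 + t⁻¹) * c ^ 2 * A :=
          setIntegral_gauge_gradient_sub_const_mul_le hconv hhom hu hφ c ht
      _ ≤ (1 + t) * (p * d) + (1 + t) * (s * d) * A := by gcongr
      _ = _ := by ring
  have hmass : d * (1 - t - s * B) ≤ ∫ x in Ω, (u x - c * φ x) ^ 2 :=
    calc d * (1 - t - s * B) ≤ (1 - t) * d - t⁻¹ * c ^ 2 * B := by
          nlinarith [mul_le_mul_of_nonneg_right hct hB]
      _ ≤ _ := setIntegral_sq_sub_const_mul_ge hu hφ c ht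
  have hmass_pos : 0 < ∫ x in Ω, (u x - c * φ x) ^ 2 := (mul_pos hd hden).trans_le hmass
  refine ⟨_, hu.sub_const_mul hφ c fun hv => ?_, ?_, ?_⟩
  · simp [congrFun hv] at hmass_pos
  · rw [setIntegral_sub_const_mul hu hφ, hφ1, mul_one, sub_self]
  · calc _ ≤ d * ((1 + t) * (p + s * A)) / (d * (1 - t - s * B)) :=
          div_le_div₀ ((integral_nonneg fun _ => sq_nonneg _).trans henergy) henergy
            (mul_pos hd hden) hmass
      _ = _ := mul_div_mul_left _ _ hd.ne'

theorem exists_mean_zero_quotient_lt (hconv : ConvexOn ℝ univ H)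
    (hhom : ∀ (t : ℝ) (ξ : EuclideanSpace ℝ (Fin n)), H (t • ξ) = |t| * H ξ)
    (hΩo : IsOpen Ω) (hΩne : Ω.Nonempty) {L δ : ℝ}
    (hle : ∀ α, 0 ≤ α → eigenInf n H α Ω ≤ L) (hδ : L < δ) :
    ∃ v, testFun n Ω v ∧ ∫ x in Ω, v x = 0 ∧
      (∫ x in Ω, H (gradient v x) ^ 2) / ∫ x in Ω, v x ^ 2 < δ := by
  obtain ⟨φ, hφ, hφ1⟩ := testFun.exists_setIntegral_eq_one hΩo hΩne
  set A := ∫ x in Ω, H (gradient φ x) ^ 2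
  set B := ∫ x in Ω, φ x ^ 2
  -- the choice `α = ε⁻²`, `t = ε`, `p = L + ε²`, `s = (L + ε²) ε` in `exists_mean_zero_quotient_le`
  have hden : Tendsto (fun ε => 1 - ε - (L + ε ^ 2) * ε * B) (𝓝 0) (𝓝 1) := by
    have : Continuous fun ε : ℝ => 1 - ε - (L + ε ^ 2) * ε * B := by fun_prop
    simpa using this.tendsto 0
  have hbound : Tendsto (fun ε => (1 + ε) * (L + ε ^ 2 + (L + ε ^ 2) * ε * A) /
      (1 - ε - (L + ε ^ 2) * ε * B)) (𝓝 0) (𝓝 L) := by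
    have : ContinuousAt (fun ε : ℝ => (1 + ε) * (L + ε ^ 2 + (L + ε ^ 2) * ε * A) /
        (1 - ε - (L + ε ^ 2) * ε * B)) 0 := by
      fun_prop (disch := norm_num)
    simpa using this.tendsto
  obtain ⟨ε, ⟨hbound_lt, hden_pos⟩, hε : 0 < ε⟩ :=
    ((((hbound.eventually (gt_mem_nhds hδ)).and (hden.eventually (lt_mem_nhds one_pos))).filter_mono
      nhdsWithin_le_nhds).and (eventually_mem_nhdsWithin (s := Ioi 0))).exists
  obtain ⟨u, hu, hR⟩ := exists_rayleighQ_lt hΩo hΩne (p := L + ε ^ 2)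
    ((hle (ε ^ 2)⁻¹ (by positivity)).trans_lt (by linarith [pow_pos hε 2]))
  obtain ⟨hN, hM⟩ := setIntegral_bounds_of_rayleighQ_lt (by positivity) hu hR
  have hM' : (∫ x in Ω, u x) ^ 2 ≤ (L + ε ^ 2) * ε * ε * ∫ x in Ω, u x ^ 2 :=
    calc (∫ x in Ω, u x) ^ 2 = ε ^ 2 * ((ε ^ 2)⁻¹ * (∫ x in Ω, u x) ^ 2) := by field_simp
      _ ≤ ε ^ 2 * ((L + ε ^ 2) * ∫ x in Ω, u x ^ 2) := by gcongr
      _ = _ := by ring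
  obtain ⟨v, hv, hv0, hvle⟩ := exists_mean_zero_quotient_le hconv hhom hu hφ hφ1 hε hN hM' hden_pos
  exact ⟨v, hv, hv0, hvle.trans_lt (by simpa [mul_assoc] using hbound_lt)⟩

end Limit

theorem eigenvalue_limit_is_twisted_general (n : ℕ) (H : EuclideanSpace ℝ (Fin n) → ℝ)
    (hconv : ConvexOn ℝ univ H)
    (hhom : ∀ (t : ℝ) (ξ : EuclideanSpace ℝ (Fin n)), H (t • ξ) = |t| * H ξ)
    (Ω : Set (EuclideanSpace ℝ (Fin n))) (hΩo : IsOpen Ω)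
    (hΩne : Ω.Nonempty)
    (L : ℝ)
    (hlim : Filter.Tendsto (fun α : ℝ => eigenInf n H α Ω) Filter.atTop (nhds L)) :
    L = twistedInf n H Ω := by
  have hle : ∀ α, 0 ≤ α → eigenInf n H α Ω ≤ L := fun α hα =>
    ge_of_tendsto hlim <| (eventually_ge_atTop α).mono fun β hαβ =>
      eigenInf_monotoneOn hΩo hΩne hα (mem_Ici.2 (hα.trans hαβ)) hαβ
  obtain ⟨v, hv, hv0, -⟩ := exists_mean_zero_quotient_lt hconv hhom hΩo hΩne hle (lt_add_one L)
  refine le_antisymm (le_csInf ⟨_, v, hv, hv0, rfl⟩ ?_) (le_of_forall_gt_imp_ge_of_dense ?_)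
  · rintro _ ⟨u, hu, hu0, rfl⟩
    refine le_of_tendsto hlim ((eventually_ge_atTop 0).mono fun α hα => ?_)
    simpa [rayleighQ_eq_of_setIntegral_eq_zero hu0] using eigenInf_le_rayleighQ (H := H) hα hu
  · intro δ hδ
    obtain ⟨w, hw, hw0, hlt⟩ := exists_mean_zero_quotient_lt hconv hhom hΩo hΩne hle hδ
    exact (twistedInf_le hw hw0).trans hlt.le

theorem eigenvalue_limit_is_twisted (n : ℕ) (H : EuclideanSpace ℝ (Fin n) → ℝ) (a b : ℝ)
    (ha : 0 < a) (hab : a ≤ b)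
    (hconv : ConvexOn ℝ univ H)
    (hhom : ∀ (t : ℝ) (ξ : EuclideanSpace ℝ (Fin n)), H (t • ξ) = |t| * H ξ)
    (hlow : ∀ ξ : EuclideanSpace ℝ (Fin n), a * ‖ξ‖ ≤ H ξ)
    (hup : ∀ ξ : EuclideanSpace ℝ (Fin n), H ξ ≤ b * ‖ξ‖)
    (Ω : Set (EuclideanSpace ℝ (Fin n))) (hΩo : IsOpen Ω) (hΩb : Bornology.IsBounded Ω)
    (hΩne : Ω.Nonempty)
    (L : ℝ)
    (hlim : Filter.Tendsto (fun α : ℝ => eigenInf n H α Ω) Filter.atTop (nhds L)) :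
    L = twistedInf n H Ω :=
  eigenvalue_limit_is_twisted_general n H hconv hhom Ω hΩo hΩne L hlim
end
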